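/- arXiv:1010.4207 — 10 statements merged into one kernel-verified Lean document; each statement's English description precedes it below -/
import Mathlib

section
/- Let F be a symmetric set-function (F(A) = F(V∖A) for all A) with F(∅)=0. Then its Lovász extension f is an even function: f(−w) = f(w) for all w ∈ ℝ^p. -/
/-- The Lovász extension of a set-function `F`, defined via a nondecreasing
ordering `σ = Tuple.sort w` of the components of `w`. -/
noncomputable def lovasz {p : ℕ} (F : Finset (Fin p) → ℝ) (w : Fin p → ℝ) : ℝ :=
  ∑ k : Fin p, w (Tuple.sort w k) *
    (F ((Finset.Ici k).image (Tuple.sort w)) - F ((Finset.Ioi k).image (Tuple.sort w)))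

/-!
Group the terms of the defining sum by the value `c = w (σ k)`. Along a block of ties the
differences `F (σ '' Ici k) - F (σ '' Ioi k)` telescope to `F {c ≤ w} - F {c < w}`, so
`f w = ∑_{c ∈ w(V)} c (F {c ≤ w} - F {c < w})`, whatever sorting permutation is used.
Replacing `w` by `-w` turns the level sets `{-c ≤ -w}` and `{-c < -w}` into the complements
of `{c < w}` and `{c ≤ w}`, so symmetry of `F` gives back the same sum.
-/

open Finset

theorem sum_sdiff_Ici_sub_Ioi_of_isUpperSet {ι M : Type*} [LinearOrder ι]
    [LocallyFiniteOrderTop ι] [AddCommGroup M] (H : Finset ι → M) {S T : Finset ι}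
    (hS : IsUpperSet (S : Set ι)) (hT : IsUpperSet (T : Set ι)) (hTS : T ⊆ S) :
    ∑ k ∈ S \ T, (H (Ici k) - H (Ioi k)) = H S - H T := by
  induction S using Finset.strongInduction with
  | H S ih =>
    by_cases hST : S ⊆ T
    · rw [sdiff_eq_empty_iff_subset.mpr hST, sum_empty, subset_antisymm hST hTS, sub_self]
    have hne : S.Nonempty := nonempty_iff_ne_empty.mpr fun h => hST (h ▸ empty_subset T)
    set a := S.min' hne
    have haS : a ∈ S := min'_mem S hne
    have hSa : S = Ici a := by
      ext x
      exact ⟨fun hx => mem_Ici.mpr (min'_le S x hx), fun hx => hS (mem_Ici.mp hx) haS⟩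
    have haT : a ∉ T := fun ha => hST (hSa ▸ fun x hx => hT (mem_Ici.mp hx) ha)
    have hSa' : S.erase a = Ioi a := by rw [hSa, Ici_erase]
    have hS' : IsUpperSet (S.erase a : Set ι) := by rw [hSa', coe_Ioi]; exact isUpperSet_Ioi a
    have hTS' : T ⊆ S.erase a := fun x hx => mem_erase.mpr ⟨fun h => haT (h ▸ hx), hTS hx⟩
    rw [← insert_erase (mem_sdiff.mpr ⟨haS, haT⟩), sum_insert (notMem_erase a _), ← erase_sdiff_comm,
      ih _ (erase_ssubset haS) hS' hTS', hSa', ← hSa]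
    abel

theorem sum_sorted_eq_sum_image {ι α : Type*} [LinearOrder ι] [Fintype ι]
    [LocallyFiniteOrderTop ι] [Fintype α] [DecidableEq α] (F : Finset α → ℝ) (w : α → ℝ)
    (σ : ι ≃ α) (hσ : Monotone (w ∘ σ)) :
    ∑ k, w (σ k) * (F ((Ici k).image σ) - F ((Ioi k).image σ))
      = ∑ c ∈ univ.image w, c * (F {i | c ≤ w i} - F {i | c < w i}) := by
  have hblock : ∀ c, ∑ k with w (σ k) = c, (F ((Ici k).image σ) - F ((Ioi k).image σ))
      = F {i | c ≤ w i} - F {i | c < w i} := by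
    intro c
    have hfiber : ({k | w (σ k) = c} : Finset ι)
        = ({k | c ≤ w (σ k)} : Finset ι) \ ({k | c < w (σ k)} : Finset ι) := by
      ext k
      simp only [mem_filter, mem_sdiff, mem_univ, true_and, not_lt, le_antisymm_iff, and_comm]
    rw [hfiber, sum_sdiff_Ici_sub_Ioi_of_isUpperSet (fun S => F (S.image σ))
      (by rw [coe_filter_univ]; exact (isUpperSet_Ici c).preimage hσ)
      (by rw [coe_filter_univ]; exact (isUpperSet_Ioi c).preimage hσ)
      (monotone_filter_right _ fun _ _ h => h.le), ← filter_image (p := (c ≤ w ·)),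
      ← filter_image (p := (c < w ·)), image_univ_equiv]
  calc ∑ k, w (σ k) * (F ((Ici k).image σ) - F ((Ioi k).image σ))
      = ∑ c ∈ univ.image w, ∑ k with w (σ k) = c,
          w (σ k) * (F ((Ici k).image σ) - F ((Ioi k).image σ)) :=
        (sum_fiberwise_of_maps_to (g := fun k => w (σ k))
          (fun k _ => mem_image_of_mem w (mem_univ _)) _).symm
    _ = ∑ c ∈ univ.image w, c * ∑ k with w (σ k) = c,
          (F ((Ici k).image σ) - F ((Ioi k).image σ)) := by
        refine sum_congr rfl fun c _ => ?_
        rw [mul_sum]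
        exact sum_congr rfl fun k hk => by rw [(mem_filter.mp hk).2]
    _ = _ := by simp only [hblock]

theorem lovasz_eq_sum_image {p : ℕ} (F : Finset (Fin p) → ℝ) (w : Fin p → ℝ) :
    lovasz F w = ∑ c ∈ univ.image w, c * (F {i | c ≤ w i} - F {i | c < w i}) :=
  sum_sorted_eq_sum_image F w (Tuple.sort w) (Tuple.monotone_sort w)

theorem lovasz_even_of_symmetric_general {p : ℕ} (F : Finset (Fin p) → ℝ)
    (hsym : ∀ A : Finset (Fin p), F A = F (Finset.univ \ A)) :
    ∀ w : Fin p → ℝ, lovasz F (fun i => -w i) = lovasz F w := by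
  intro w
  have hcompl : ∀ (P : Fin p → Prop) [DecidablePred P], F {i | ¬P i} = F {i | P i} := by
    intro P _
    rw [filter_not, ← hsym]
  have himage : univ.image (fun i => -w i) = (univ.image w).image Neg.neg := by
    rw [image_image]; rfl
  rw [lovasz_eq_sum_image, lovasz_eq_sum_image, himage, sum_image neg_injective.injOn]
  refine sum_congr rfl fun c _ => ?_
  have hle : F {i | w i ≤ c} = F {i | c < w i} := by simpa only [not_lt] using hcompl (c < w ·)
  have hlt : F {i | w i < c} = F {i | c ≤ w i} := by simpa only [not_le] using hcompl (c ≤ w ·)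
  simp only [neg_le_neg_iff, neg_lt_neg_iff, hle, hlt]
  ring

/-- The Lovász extension of a symmetric set-function is even. -/
theorem lovasz_even_of_symmetric {p : ℕ} (F : Finset (Fin p) → ℝ) (h0 : F ∅ = 0)
    (hsym : ∀ A : Finset (Fin p), F A = F (Finset.univ \ A)) :
    ∀ w : Fin p → ℝ, lovasz F (fun i => -w i) = lovasz F w :=
  lovasz_even_of_symmetric_general F hsym
end

section
/- Let F be submodular with F(∅)=0 and w ∈ ℝ_+^p. Order the components w_{j1} ≥ ... ≥ w_{jp} ≥ 0 and define s by s_{jk} = F({j1,...,jk}) − F({j1,...,j_{k−1}}). Then s ∈ P(F), s maximizes w^T s over P(F), and the maximum value equals f(w), the Lovász extension of F at w. -/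
def Submodular {p : ℕ} (F : Finset (Fin p) → ℝ) : Prop :=
  ∀ A B : Finset (Fin p), F (A ∪ B) + F (A ∩ B) ≤ F A + F B

/-- Membership in the submodular polyhedron `P(F)`. -/
def MemP {p : ℕ} (F : Finset (Fin p) → ℝ) (s : Fin p → ℝ) : Prop :=
  ∀ A : Finset (Fin p), ∑ k ∈ A, s k ≤ F A

open Finset

theorem Finset.sum_Iic_sub_Iio {ι M : Type*} [LinearOrder ι] [LocallyFiniteOrderBot ι]
    [AddCommGroup M] (G : Finset ι → M) (k : ι) :
    ∑ j ∈ Iic k, (G (Iic j) - G (Iio j)) = G (Iic k) - G ∅ := by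
  induction hn : #(Iio k) using Nat.strong_induction_on generalizing k with
  | _ n ih =>
    rw [← Iio_insert, sum_insert notMem_Iio_self, Iio_insert]
    rcases (Iio k).eq_empty_or_nonempty with hk | hk
    · rw [hk, sum_empty]
      abel
    · set j := (Iio k).max' hk
      have hjk : j < k := mem_Iio.mp ((Iio k).max'_mem hk)
      have hIio : Iio k = Iic j := by
        ext x
        exact ⟨fun hx => mem_Iic.mpr ((Iio k).le_max' x hx),
          fun hx => mem_Iio.mpr ((mem_Iic.mp hx).trans_lt hjk)⟩
      have hcard : #(Iio j) < n := hn ▸ card_lt_card (Iio_ssubset_Iio hjk)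
      rw [hIio, ih _ hcard j rfl]
      abel

theorem Fin.sum_mul_nonneg_of_antitone {R : Type*} [CommRing R] [PartialOrder R]
    [IsOrderedRing R] {n : ℕ} {c d : Fin n → R} (hc : Antitone c) (hc₀ : ∀ i, 0 ≤ c i)
    (hd : ∀ k, 0 ≤ ∑ i ∈ Iic k, d i) : 0 ≤ ∑ i, c i * d i := by
  induction n with
  | zero => simp
  | succ n ih =>
    have hsplit : ∑ i, c i * d i = ∑ i : Fin n, (c i.castSucc - c (last n)) * d i.castSucc
        + c (last n) * ∑ i, d i := by
      simp only [Fin.sum_univ_castSucc, sub_mul, sum_sub_distrib, mul_add, mul_sum]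
      abel
    have htotal : 0 ≤ ∑ i, d i := by simpa [← Fin.top_eq_last] using hd (last n)
    have hhead : 0 ≤ ∑ i : Fin n, (c i.castSucc - c (last n)) * d i.castSucc :=
      ih (fun i j hij => sub_le_sub_right (hc (Fin.castSucc_le_castSucc_iff.mpr hij)) _)
        (fun i => sub_nonneg.mpr (hc (Fin.le_last _)))
        (fun k => by simpa [← Fin.sum_Iic_castSucc] using hd k.castSucc)
    rw [hsplit]
    exact add_nonneg hhead (mul_nonneg (hc₀ _) htotal)

variable {p : ℕ}

theorem Submodular.insert_sub_le_insert_sub {F : Finset (Fin p) → ℝ} (hF : Submodular F)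
    {B C : Finset (Fin p)} (hBC : B ⊆ C) {a : Fin p} (ha : a ∉ C) :
    F (insert a C) - F C ≤ F (insert a B) - F B := by
  have hunion : insert a B ∪ C = insert a C := by
    rw [insert_union, union_eq_right.mpr hBC]
  have hinter : insert a B ∩ C = B := by
    rw [insert_inter_of_notMem ha, inter_eq_left.mpr hBC]
  have := hF (insert a B) C
  rw [hunion, hinter] at this
  linarith

def IsGreedy (F : Finset (Fin p) → ℝ) (σ : Equiv.Perm (Fin p)) (s : Fin p → ℝ) : Prop :=
  ∀ k : Fin p, s (σ k) = F ((Iic k).image σ) - F ((Iio k).image σ)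

theorem exists_isGreedy (F : Finset (Fin p) → ℝ) (σ : Equiv.Perm (Fin p)) :
    ∃ s, IsGreedy F σ s :=
  ⟨fun i => F ((Iic (σ.symm i)).image σ) - F ((Iio (σ.symm i)).image σ), fun k => by simp⟩

section Greedy

variable {F : Finset (Fin p) → ℝ} {σ : Equiv.Perm (Fin p)} {s : Fin p → ℝ}

theorem IsGreedy.memP (hs : IsGreedy F σ s) (hF : Submodular F) (h0 : F ∅ = 0) : MemP F s := by
  classical
  intro A
  induction A using Finset.induction_on_max_value σ.symm with
  | empty => simp [h0]
  | insert a B haB hmax ih =>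
    set k := σ.symm a
    have hBC : B ⊆ (Iio k).image σ := fun x hx =>
      mem_image.mpr ⟨σ.symm x, mem_Iio.mpr ((hmax x hx).lt_of_ne
        (σ.symm.injective.ne (ne_of_mem_of_not_mem hx haB))), σ.apply_symm_apply x⟩
    have haC : a ∉ (Iio k).image σ := fun h => by
      obtain ⟨x, hx, rfl⟩ := mem_image.mp h
      exact (mem_Iio.mp hx).ne (σ.symm_apply_apply x).symm
    have hsa : s a = F (insert a ((Iio k).image σ)) - F ((Iio k).image σ) := by
      rw [← σ.apply_symm_apply a, hs k, ← image_insert, Iio_insert]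
    have := hF.insert_sub_le_insert_sub hBC haC
    rw [sum_insert haB]
    linarith

theorem IsGreedy.sum_image_Iic (hs : IsGreedy F σ s) (h0 : F ∅ = 0) (k : Fin p) :
    ∑ i ∈ (Iic k).image σ, s i = F ((Iic k).image σ) := by
  rw [sum_image σ.injective.injOn, sum_congr rfl fun j _ => hs j]
  simpa [h0] using sum_Iic_sub_Iio (fun B => F (B.image σ)) k

theorem IsGreedy.sum_mul_le {w t : Fin p → ℝ} (hs : IsGreedy F σ s) (h0 : F ∅ = 0)
    (hw : ∀ i, 0 ≤ w i) (hσ : Antitone (w ∘ σ)) (ht : MemP F t) :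
    ∑ i, w i * t i ≤ ∑ i, w i * s i := by
  have hprefix : ∀ k, 0 ≤ ∑ j ∈ Iic k, (s (σ j) - t (σ j)) := fun k => by
    have := ht ((Iic k).image σ)
    rw [sum_image σ.injective.injOn, ← hs.sum_image_Iic h0, sum_image σ.injective.injOn] at this
    rw [sum_sub_distrib]
    linarith
  have := Fin.sum_mul_nonneg_of_antitone hσ (fun k => hw (σ k)) hprefix
  rw [← Equiv.sum_comp σ (fun i => w i * t i), ← Equiv.sum_comp σ (fun i => w i * s i)]
  simpa [mul_sub] using this

theorem IsGreedy.sum_mul_eq {w s' : Fin p → ℝ} {σ' : Equiv.Perm (Fin p)} (hF : Submodular F)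
    (h0 : F ∅ = 0) (hw : ∀ i, 0 ≤ w i) (hs : IsGreedy F σ s) (hσ : Antitone (w ∘ σ))
    (hs' : IsGreedy F σ' s') (hσ' : Antitone (w ∘ σ')) :
    ∑ i, w i * s i = ∑ i, w i * s' i :=
  le_antisymm (hs'.sum_mul_le h0 hw hσ' (hs.memP hF h0))
    (hs.sum_mul_le h0 hw hσ (hs'.memP hF h0))

theorem antitone_comp_revPerm_trans_sort (w : Fin p → ℝ) :
    Antitone (w ∘ (Fin.revPerm.trans (Tuple.sort w))) :=
  fun _ _ hij => Tuple.monotone_sort w (Fin.rev_le_rev.mpr hij)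

theorem lovasz_eq_sum_mul_of_isGreedy {w : Fin p → ℝ}
    (hs : IsGreedy F (Fin.revPerm.trans (Tuple.sort w)) s) :
    lovasz F w = ∑ i, w i * s i := by
  have himage : ∀ (I : Finset (Fin p)),
      I.image (Fin.revPerm.trans (Tuple.sort w)) = (I.image Fin.rev).image (Tuple.sort w) :=
    fun I => by rw [image_image]; rfl
  rw [← Equiv.sum_comp (Fin.revPerm.trans (Tuple.sort w)) (fun i => w i * s i), lovasz,
    ← Equiv.sum_comp Fin.revPerm]
  refine sum_congr rfl fun k _ => ?_
  rw [hs k, himage, himage, Fin.finsetImage_rev_Iic, Fin.finsetImage_rev_Iio]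
  rfl

end Greedy

/-- Greedy algorithm: given an ordering `σ` with `w (σ 1) ≥ ⋯ ≥ w (σ p) ≥ 0`, the
greedy vector `s` with `s (σ k) = F({σ 1,…,σ k}) − F({σ 1,…,σ (k−1)})` lies in `P(F)`,
maximizes `wᵀ s` over `P(F)`, and the maximal value is the Lovász extension `f(w)`. -/
theorem greedy_algorithm {p : ℕ} (F : Finset (Fin p) → ℝ)
    (hF : Submodular F) (h0 : F ∅ = 0)
    (w : Fin p → ℝ) (hw : ∀ i, 0 ≤ w i)
    (σ : Equiv.Perm (Fin p)) (hσ : Antitone (w ∘ σ))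
    (s : Fin p → ℝ)
    (hs : ∀ k : Fin p,
      s (σ k) = F ((Finset.Iic k).image σ) - F ((Finset.Iio k).image σ)) :
    MemP F s ∧ (∀ t : Fin p → ℝ, MemP F t → ∑ i, w i * t i ≤ ∑ i, w i * s i) ∧
      ∑ i, w i * s i = lovasz F w := by
  have hgreedy : IsGreedy F σ s := hs
  obtain ⟨s', hs'⟩ := exists_isGreedy F (Fin.revPerm.trans (Tuple.sort w))
  refine ⟨hgreedy.memP hF h0, fun t ht => hgreedy.sum_mul_le h0 hw hσ ht, ?_⟩
  rw [lovasz_eq_sum_mul_of_isGreedy hs']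
  exact hgreedy.sum_mul_eq hF h0 hw hσ hs' (antitone_comp_revPerm_trans_sort w)
end

section
/- The greedy vector is a base: if F is submodular with F(∅)=0 and s is defined by s_{jk} = F({j1,...,jk}) − F({j1,...,j_{k−1}}) for any ordering j1,...,jp of V, then s ∈ B(F), i.e., s(A) ≤ F(A) for all A ⊆ V and s(V) = F(V). In particular the base polyhedron B(F) is nonempty. -/
/-- Membership in the base polyhedron `B(F)`. -/
def MemB {p : ℕ} (F : Finset (Fin p) → ℝ) (s : Fin p → ℝ) : Prop :=
  (∀ A : Finset (Fin p), ∑ k ∈ A, s k ≤ F A) ∧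
    ∑ k, s k = F Finset.univ

/-!
Relabel `V` along the ordering so that it becomes the identity; submodularity survives.
The greedy increments then telescope along the chain `Iic k`, giving `s(V) = F(V)`.
For an arbitrary `A`, peel off its largest element `a`: by diminishing returns the increment
of `F` at `a` over the prefix `Iio a ⊇ A \ {a}` is at most its increment over `A \ {a}`,
and induction gives `s(A) ≤ F(A)`.
-/

open Finset

section Telescoping

variable {ι M : Type*} [LinearOrder ι] [LocallyFiniteOrderBot ι] [AddCommGroup M]

theorem Finset.sum_Iic_sub_Iio_of_isLowerSet (G : Finset ι → M) (B : Finset ι)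
    (hB : IsLowerSet (B : Set ι)) :
    ∑ k ∈ B, (G (Iic k) - G (Iio k)) = G B - G ∅ := by
  induction B using Finset.induction_on_max with
  | empty => simp
  | insert a B hlt ih =>
    have hBa : B = Iio a := by
      ext x
      refine ⟨fun hx => mem_Iio.2 (hlt x hx), fun hx => ?_⟩
      have hx' := hB (le_of_lt (mem_Iio.1 hx)) (by simp : a ∈ (insert a B : Finset ι))
      exact (mem_insert.1 hx').resolve_left (ne_of_lt (mem_Iio.1 hx))
    subst hBa
    rw [sum_insert (by simp), ih (by simpa using isLowerSet_Iio a), Iio_insert]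
    abel

theorem Finset.sum_univ_Iic_sub_Iio [Fintype ι] (G : Finset ι → M) :
    ∑ k, (G (Iic k) - G (Iio k)) = G univ - G ∅ :=
  sum_Iic_sub_Iio_of_isLowerSet G univ (by simpa using isLowerSet_univ)

end Telescoping

namespace Submodular

variable {p : ℕ} {F : Finset (Fin p) → ℝ}

theorem comp_image (hF : Submodular F) {f : Fin p → Fin p} (hf : Function.Injective f) :
    Submodular (fun B => F (B.image f)) := fun A B => by
  simpa only [image_union, image_inter _ _ hf] using hF (A.image f) (B.image f)

theorem insert_sub_le_insert_sub_s7 (hF : Submodular F) {B C : Finset (Fin p)} (hBC : B ⊆ C)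
    {a : Fin p} (ha : a ∉ C) :
    F (insert a C) - F C ≤ F (insert a B) - F B := by
  have hunion : insert a B ∪ C = insert a C := by
    rw [insert_union, union_eq_right.2 hBC]
  have hinter : insert a B ∩ C = B := by
    rw [insert_inter_of_notMem ha, inter_eq_left.2 hBC]
  have := hF (insert a B) C
  rw [hunion, hinter] at this
  linarith

theorem sum_Iic_sub_Iio_le (hF : Submodular F) (B : Finset (Fin p)) :
    ∑ k ∈ B, (F (Iic k) - F (Iio k)) ≤ F B - F ∅ := by
  induction B using Finset.induction_on_max with
  | empty => simp
  | insert a B hlt ih =>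
    have hmarginal : F (Iic a) - F (Iio a) ≤ F (insert a B) - F B := by
      rw [← Iio_insert]
      exact hF.insert_sub_le_insert_sub_s7 (fun x hx => mem_Iio.2 (hlt x hx)) (by simp)
    rw [sum_insert fun ha => lt_irrefl a (hlt a ha)]
    linarith

end Submodular

/-- The greedy vector associated with any ordering of `V` is a base; in particular
the base polyhedron is nonempty. -/
theorem greedy_vector_mem_base {p : ℕ} (F : Finset (Fin p) → ℝ)
    (hF : Submodular F) (h0 : F ∅ = 0)
    (σ : Equiv.Perm (Fin p)) (s : Fin p → ℝ)
    (hs : ∀ k : Fin p,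
      s (σ k) = F ((Finset.Iic k).image σ) - F ((Finset.Iio k).image σ)) :
    MemB F s ∧ ∃ t : Fin p → ℝ, MemB F t := by
  set G : Finset (Fin p) → ℝ := fun B => F (B.image σ)
  have hG : Submodular G := hF.comp_image σ.injective
  have hG0 : G ∅ = 0 := by simpa [G] using h0
  have hsG : ∀ A : Finset (Fin p),
      ∑ k ∈ A, s k = ∑ k ∈ A.image σ.symm, (G (Iic k) - G (Iio k)) := by
    intro A
    rw [sum_image σ.symm.injective.injOn]
    exact sum_congr rfl fun a _ => by rw [← hs, Equiv.apply_symm_apply]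
  have hmem : MemB F s := by
    refine ⟨fun A => ?_, ?_⟩
    · calc ∑ k ∈ A, s k ≤ G (A.image σ.symm) - G ∅ :=
            (hsG A).trans_le (hG.sum_Iic_sub_Iio_le _)
        _ = F A := by simp [G, hG0, image_image]
    · calc ∑ k, s k = G univ - G ∅ := by rw [hsG, image_univ_equiv, sum_univ_Iic_sub_Iio]
        _ = F univ := by simp [G, hG0, image_univ_equiv]
  exact ⟨hmem, s, hmem⟩
end

section
/- A set-function F with F(∅)=0 is submodular if and only if its Lovász extension f is convex on ℝ^p. -/
open Finset

variable {p : ℕ}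

def Uset (π : Equiv.Perm (Fin p)) (k : ℕ) : Finset (Fin p) :=
  (Finset.univ.filter fun j : Fin p => k ≤ (j : ℕ)).image π

lemma mem_Uset {π : Equiv.Perm (Fin p)} {k : ℕ} {i : Fin p} :
    i ∈ Uset π k ↔ k ≤ ((π.symm i : Fin p) : ℕ) := by
  simp only [Uset, Finset.mem_image, Finset.mem_filter, Finset.mem_univ, true_and]
  constructor
  · rintro ⟨j, hj, rfl⟩; simpa using hj
  · intro h; exact ⟨π.symm i, h, by simp⟩

lemma Uset_zero (π : Equiv.Perm (Fin p)) : Uset π 0 = Finset.univ := by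
  ext i; simp [mem_Uset]

lemma Uset_eq_empty (π : Equiv.Perm (Fin p)) {k : ℕ} (hk : p ≤ k) : Uset π k = ∅ := by
  ext i; simp only [mem_Uset, Finset.notMem_empty, iff_false]
  exact fun h => absurd ((π.symm i).isLt) (not_lt.2 (hk.trans h))

lemma Uset_succ {π : Equiv.Perm (Fin p)} {k : ℕ} (hk : k < p) :
    Uset π k = insert (π ⟨k, hk⟩) (Uset π (k + 1)) := by
  ext i
  simp only [mem_Uset, Finset.mem_insert]
  constructor
  · intro h
    rcases eq_or_lt_of_le h with h | h
    · left
      have : π.symm i = ⟨k, hk⟩ := Fin.ext h.symm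
      rw [← this]; simp
    · right; exact h
  · rintro (rfl | h)
    · simp
    · exact (Nat.le_succ k).trans h

lemma notMem_Uset_succ {π : Equiv.Perm (Fin p)} {k : ℕ} (hk : k < p) :
    π ⟨k, hk⟩ ∉ Uset π (k + 1) := by
  simp [mem_Uset]

lemma image_Ici (π : Equiv.Perm (Fin p)) (k : Fin p) :
    (Finset.Ici k).image π = Uset π (k : ℕ) := by
  unfold Uset; congr 1; ext j
  rw [Finset.mem_Ici, Finset.mem_filter]
  simp only [Finset.mem_univ, true_and]
  exact Fin.le_def

lemma image_Ioi (π : Equiv.Perm (Fin p)) (k : Fin p) :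
    (Finset.Ioi k).image π = Uset π ((k : ℕ) + 1) := by
  unfold Uset; congr 1; ext j
  rw [Finset.mem_Ioi, Finset.mem_filter]
  simp only [Finset.mem_univ, true_and]
  rw [Fin.lt_def, Nat.succ_le_iff]


noncomputable def gp (F : Finset (Fin p) → ℝ) (π : Equiv.Perm (Fin p)) (w : Fin p → ℝ) : ℝ :=
  ∑ k : Fin p, w (π k) * (F (Uset π (k : ℕ)) - F (Uset π ((k : ℕ) + 1)))

lemma lovasz_eq_gp (F : Finset (Fin p) → ℝ) (w : Fin p → ℝ) :
    lovasz F w = gp F (Tuple.sort w) w := by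
  unfold lovasz gp
  exact Finset.sum_congr rfl fun k _ => by rw [image_Ici, image_Ioi]

noncomputable def sval (F : Finset (Fin p) → ℝ) (π : Equiv.Perm (Fin p)) (i : Fin p) : ℝ :=
  F (Uset π ((π.symm i : Fin p) : ℕ)) - F (Uset π (((π.symm i : Fin p) : ℕ) + 1))

lemma sval_apply (F : Finset (Fin p) → ℝ) (π : Equiv.Perm (Fin p)) (k : Fin p) :
    sval F π (π k) = F (Uset π (k : ℕ)) - F (Uset π ((k : ℕ) + 1)) := by
  simp [sval]

lemma gp_eq_sum_sval (F : Finset (Fin p) → ℝ) (π : Equiv.Perm (Fin p)) (w : Fin p → ℝ) :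
    gp F π w = ∑ i : Fin p, w i * sval F π i := by
  rw [← Equiv.sum_comp π (fun i => w i * sval F π i)]
  exact Finset.sum_congr rfl fun k _ => by rw [sval_apply]

lemma sum_sval_Uset (F : Finset (Fin p) → ℝ) (h0 : F ∅ = 0) (π : Equiv.Perm (Fin p)) :
    ∀ k : ℕ, (∑ i ∈ Uset π k, sval F π i) = F (Uset π k) := by
  suffices h : ∀ n k, p - k ≤ n → (∑ i ∈ Uset π k, sval F π i) = F (Uset π k) by
    intro k; exact h p k (Nat.sub_le _ _)
  intro n
  induction n with
  | zero =>
    intro k hk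
    rw [Uset_eq_empty π (Nat.le_of_sub_eq_zero (Nat.le_zero.mp hk))]
    simp [h0]
  | succ n ih =>
    intro k hk
    by_cases hkp : k < p
    · have hsum : (∑ i ∈ Uset π k, sval F π i)
          = sval F π (π ⟨k, hkp⟩) + ∑ i ∈ Uset π (k+1), sval F π i := by
        rw [Uset_succ hkp]; exact Finset.sum_insert (notMem_Uset_succ hkp)
      rw [hsum, ih (k+1) (by omega), sval_apply]
      simp only [Fin.val_mk]
      ring
    · rw [Uset_eq_empty π (le_of_not_gt hkp)]; simp [h0]


lemma fin_telescope (f : ℕ → ℝ) :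
    ∑ k : Fin p, (f (k : ℕ) - f ((k : ℕ) + 1)) = f 0 - f p := by
  rw [Fin.sum_univ_eq_sum_range (fun k => f k - f (k + 1)) p]
  exact Finset.sum_range_sub' f p

lemma sum_sval_le (F : Finset (Fin p) → ℝ) (h0 : F ∅ = 0) (hsub : Submodular F)
    (π : Equiv.Perm (Fin p)) (A : Finset (Fin p)) :
    (∑ i ∈ A, sval F π i) ≤ F A := by
  have h1 : (∑ i ∈ A, sval F π i)
      = ∑ k : Fin p, (if π k ∈ A then sval F π (π k) else 0) := by
    rw [Equiv.sum_comp π (fun i => if i ∈ A then sval F π i else 0)]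
    rw [Finset.sum_ite_mem, Finset.univ_inter]
  have h2 : ∀ k : Fin p, (if π k ∈ A then sval F π (π k) else 0)
      ≤ F (A ∩ Uset π (k : ℕ)) - F (A ∩ Uset π ((k : ℕ) + 1)) := by
    intro k
    have hk : (k : ℕ) < p := k.isLt
    have hins : Uset π (k : ℕ) = insert (π ⟨(k : ℕ), hk⟩) (Uset π ((k : ℕ) + 1)) :=
      Uset_succ hk
    have hmk : (⟨(k : ℕ), hk⟩ : Fin p) = k := rfl
    by_cases hA : π k ∈ A
    · rw [if_pos hA, sval_apply]
      have hU : A ∩ Uset π (k : ℕ) = insert (π k) (A ∩ Uset π ((k : ℕ) + 1)) := by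
        rw [hins, hmk, Finset.inter_insert_of_mem hA]
      have hsubm := hsub (A ∩ Uset π ((k : ℕ))) (Uset π ((k : ℕ) + 1))
      have hU2 : (A ∩ Uset π (k : ℕ)) ∪ Uset π ((k : ℕ) + 1) = Uset π (k : ℕ) := by
        rw [hU, Finset.insert_union,
          Finset.union_eq_right.mpr Finset.inter_subset_right, hins, hmk]
      have hU3 : (A ∩ Uset π (k : ℕ)) ∩ Uset π ((k : ℕ) + 1)
          = A ∩ Uset π ((k : ℕ) + 1) := by
        rw [hU, Finset.insert_inter_of_notMem (by rw [← hmk]; exact notMem_Uset_succ hk)]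
        rw [Finset.inter_assoc, Finset.inter_self]
      rw [hU2, hU3] at hsubm
      linarith
    · rw [if_neg hA]
      have : A ∩ Uset π (k : ℕ) = A ∩ Uset π ((k : ℕ) + 1) := by
        rw [hins, hmk, Finset.inter_insert_of_notMem hA]
      rw [this]; simp
  calc (∑ i ∈ A, sval F π i)
      ≤ ∑ k : Fin p, (F (A ∩ Uset π (k : ℕ)) - F (A ∩ Uset π ((k : ℕ) + 1))) := by
        rw [h1]; exact Finset.sum_le_sum fun k _ => h2 k
    _ = F (A ∩ Uset π 0) - F (A ∩ Uset π p) :=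
        fin_telescope (fun k => F (A ∩ Uset π k))
    _ = F A := by
        rw [Uset_zero, Uset_eq_empty π le_rfl, Finset.inter_univ, Finset.inter_empty, h0]
        ring

lemma sum_sval_univ (F : Finset (Fin p) → ℝ) (h0 : F ∅ = 0) (π : Equiv.Perm (Fin p)) :
    (∑ i : Fin p, sval F π i) = F Finset.univ := by
  have := sum_sval_Uset F h0 π 0
  rwa [Uset_zero] at this

def dcoef (g : ℕ → ℝ) (k : ℕ) : ℝ := if k = 0 then g 0 else g k - g (k - 1)

lemma abel (g S : ℕ → ℝ) (n : ℕ) :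
    ∑ k ∈ Finset.range (n+1), g k * (S k - S (k+1))
      = (∑ k ∈ Finset.range (n+1), dcoef g k * S k) - g n * S (n+1) := by
  induction n with
  | zero => simp [dcoef]; ring
  | succ n ih =>
      rw [Finset.sum_range_succ, ih, Finset.sum_range_succ (fun k => dcoef g k * S k) (n+1)]
      have hd : dcoef g (n+1) = g (n+1) - g n := by simp [dcoef]
      rw [hd]; ring

lemma abel' (g S : ℕ → ℝ) (n : ℕ) (hS : S n = 0) :
    ∑ k ∈ Finset.range n, g k * (S k - S (k+1))
      = ∑ k ∈ Finset.range n, dcoef g k * S k := by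
  cases n with
  | zero => simp
  | succ m => rw [abel g S m, hS, mul_zero, sub_zero]

noncomputable def gfun (σ : Equiv.Perm (Fin p)) (w : Fin p → ℝ) (k : ℕ) : ℝ :=
  if h : k < p then w (σ ⟨k, h⟩) else 0

lemma expand (F : Finset (Fin p) → ℝ) (h0 : F ∅ = 0) (π σ : Equiv.Perm (Fin p))
    (w : Fin p → ℝ) :
    gp F π w = ∑ k ∈ Finset.range p,
      dcoef (gfun σ w) k * (∑ i ∈ Uset σ k, sval F π i) := by
  set S : ℕ → ℝ := fun k => ∑ i ∈ Uset σ k, sval F π i with hSdef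
  have hS : S p = 0 := by
    simp only [hSdef, Uset_eq_empty σ le_rfl, Finset.sum_empty]
  rw [← abel' (gfun σ w) S p hS]
  rw [gp_eq_sum_sval, ← Equiv.sum_comp σ (fun i => w i * sval F π i)]
  rw [← Fin.sum_univ_eq_sum_range (fun k => gfun σ w k * (S k - S (k+1))) p]
  refine Finset.sum_congr rfl fun k _ => ?_
  have hkp : (k : ℕ) < p := k.isLt
  have hg : gfun σ w (k : ℕ) = w (σ k) := by
    rw [gfun, dif_pos hkp]
  have hSk : S (k : ℕ) = sval F π (σ k) + S ((k : ℕ) + 1) := by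
    simp only [hSdef]
    have hins : Uset σ (k : ℕ) = insert (σ ⟨(k : ℕ), hkp⟩) (Uset σ ((k : ℕ) + 1)) :=
      Uset_succ hkp
    rw [hins, Finset.sum_insert (notMem_Uset_succ hkp)]
  rw [hg, hSk]; ring

lemma gp_le_lovasz (F : Finset (Fin p) → ℝ) (h0 : F ∅ = 0) (hsub : Submodular F)
    (π : Equiv.Perm (Fin p)) (w : Fin p → ℝ) :
    gp F π w ≤ lovasz F w := by
  set σ := Tuple.sort w with hσ
  rw [lovasz_eq_gp, ← hσ, expand F h0 π σ w, expand F h0 σ σ w]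
  apply Finset.sum_le_sum
  intro k hk
  have hkp : k < p := Finset.mem_range.mp hk
  rw [sum_sval_Uset F h0 σ k]
  by_cases hk0 : k = 0
  · subst hk0
    have h1 : (∑ i ∈ Uset σ 0, sval F π i) = F (Uset σ 0) := by
      rw [Uset_zero σ, ← sum_sval_univ F h0 π]
    rw [h1]
  · have hd : 0 ≤ dcoef (gfun σ w) k := by
      rw [dcoef, if_neg hk0]
      have hk1 : k - 1 < p := by omega
      have hmono := Tuple.monotone_sort w
        (show (⟨k-1, hk1⟩ : Fin p) ≤ ⟨k, hkp⟩ by rw [Fin.mk_le_mk]; omega)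
      simp only [Function.comp_apply] at hmono
      rw [gfun, gfun, dif_pos hkp, dif_pos hk1, hσ]
      linarith
    exact mul_le_mul_of_nonneg_left (sum_sval_le F h0 hsub π (Uset σ k)) hd

lemma gp_linear (F : Finset (Fin p) → ℝ) (π : Equiv.Perm (Fin p)) (a b : ℝ)
    (x y : Fin p → ℝ) :
    gp F π (a • x + b • y) = a * gp F π x + b * gp F π y := by
  unfold gp
  rw [Finset.mul_sum, Finset.mul_sum, ← Finset.sum_add_distrib]
  refine Finset.sum_congr rfl fun k _ => ?_
  simp only [Pi.add_apply, Pi.smul_apply, smul_eq_mul]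
  ring

lemma level_sum (F : Finset (Fin p) → ℝ) (h0 : F ∅ = 0) (w : Fin p → ℝ) (c : ℝ) :
    ∑ k : Fin p, (if c ≤ w (Tuple.sort w k) then (1:ℝ) else 0) *
      (F (Uset (Tuple.sort w) (k : ℕ)) - F (Uset (Tuple.sort w) ((k : ℕ) + 1)))
    = F (Finset.univ.filter fun i => c ≤ w i) := by
  classical
  set σ := Tuple.sort w with hσ
  have hmono : Monotone (fun k => w (σ k)) := by
    have := Tuple.monotone_sort w
    rw [← hσ] at this
    exact this
  have h1 : (∑ k : Fin p, (if c ≤ w (σ k) then (1:ℝ) else 0) *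
        (F (Uset σ (k : ℕ)) - F (Uset σ ((k : ℕ) + 1))))
      = ∑ k ∈ Finset.univ.filter (fun k : Fin p => c ≤ w (σ k)), sval F σ (σ k) := by
    rw [Finset.sum_filter]
    refine Finset.sum_congr rfl fun k _ => ?_
    rw [sval_apply]
    by_cases h : c ≤ w (σ k) <;> simp [h]
  rcases (Finset.univ.filter fun k : Fin p => c ≤ w (σ k)).eq_empty_or_nonempty with he | hne
  · rw [h1, he, Finset.sum_empty]
    have hlev : (Finset.univ.filter fun i => c ≤ w i) = ∅ := by
      ext i
      simp only [Finset.mem_filter, Finset.mem_univ, true_and, Finset.notMem_empty, iff_false]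
      intro hc
      have hmem : σ.symm i ∈ Finset.univ.filter (fun k : Fin p => c ≤ w (σ k)) := by
        simp only [Finset.mem_filter, Finset.mem_univ, true_and, Equiv.apply_symm_apply]
        exact hc
      rw [he] at hmem
      exact absurd hmem (Finset.notMem_empty _)
    rw [hlev, h0]
  · set m := (Finset.univ.filter fun k : Fin p => c ≤ w (σ k)).min' hne with hm
    have hP : (Finset.univ.filter fun k : Fin p => c ≤ w (σ k))
        = Finset.univ.filter (fun k : Fin p => m ≤ k) := by
      ext k
      simp only [Finset.mem_filter, Finset.mem_univ, true_and]
      constructor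
      · intro hk
        exact Finset.min'_le _ _ (by simp only [Finset.mem_filter, Finset.mem_univ, true_and]; exact hk)
      · intro hk
        have hmm := Finset.min'_mem _ hne
        simp only [Finset.mem_filter, Finset.mem_univ, true_and] at hmm
        exact hmm.trans (hmono hk)
    have hU : Uset σ (m : ℕ) = Finset.univ.filter (fun i => c ≤ w i) := by
      ext i
      rw [mem_Uset]
      simp only [Finset.mem_filter, Finset.mem_univ, true_and]
      constructor
      · intro h
        have hmem : σ.symm i ∈ Finset.univ.filter (fun k : Fin p => m ≤ k) := by
          simp only [Finset.mem_filter, Finset.mem_univ, true_and]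
          exact Fin.le_def.mpr h
        rw [← hP] at hmem
        simp only [Finset.mem_filter, Finset.mem_univ, true_and, Equiv.apply_symm_apply] at hmem
        exact hmem
      · intro h
        have hmem : σ.symm i ∈ Finset.univ.filter (fun k : Fin p => c ≤ w (σ k)) := by
          simp only [Finset.mem_filter, Finset.mem_univ, true_and, Equiv.apply_symm_apply]
          exact h
        rw [hP] at hmem
        simp only [Finset.mem_filter, Finset.mem_univ, true_and] at hmem
        exact Fin.le_def.mp hmem
    have hUim : Uset σ (m : ℕ) = (Finset.univ.filter fun k : Fin p => m ≤ k).image σ := by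
      unfold Uset
      congr 1
    have h2 : (∑ k ∈ (Finset.univ.filter fun k : Fin p => c ≤ w (σ k)), sval F σ (σ k))
        = ∑ i ∈ Uset σ (m : ℕ), sval F σ i := by
      rw [hP, hUim, Finset.sum_image (fun a _ b _ h => σ.injective h)]
    rw [h1, h2, sum_sval_Uset F h0 σ, hU]

lemma lovasz_two_indicators (F : Finset (Fin p) → ℝ) (h0 : F ∅ = 0)
    {S T : Finset (Fin p)} (hTS : T ⊆ S) :
    lovasz F (fun i => (if i ∈ S then (1:ℝ) else 0) + (if i ∈ T then (1:ℝ) else 0))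
      = F S + F T := by
  classical
  set w : Fin p → ℝ := fun i => (if i ∈ S then (1:ℝ) else 0) + (if i ∈ T then (1:ℝ) else 0)
    with hw
  have hval : ∀ i, w i = (if (1:ℝ) ≤ w i then (1:ℝ) else 0) + (if (2:ℝ) ≤ w i then 1 else 0) := by
    intro i
    by_cases hS : i ∈ S
    · by_cases hT : i ∈ T
      · simp only [hw, hS, hT, if_pos]; norm_num
      · simp only [hw, if_pos hS, if_neg hT]; norm_num
    · have hT : i ∉ T := fun h => hS (hTS h)
      simp only [hw, if_neg hS, if_neg hT]; norm_num
  have hgp : lovasz F w = ∑ k : Fin p,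
      w (Tuple.sort w k) * (F (Uset (Tuple.sort w) (k : ℕ)) - F (Uset (Tuple.sort w) ((k : ℕ) + 1))) := by
    rw [lovasz_eq_gp]; rfl
  rw [hgp]
  have hsplit : ∀ k : Fin p,
      w (Tuple.sort w k) * (F (Uset (Tuple.sort w) (k : ℕ)) - F (Uset (Tuple.sort w) ((k : ℕ) + 1)))
      = (if (1:ℝ) ≤ w (Tuple.sort w k) then (1:ℝ) else 0) *
          (F (Uset (Tuple.sort w) (k : ℕ)) - F (Uset (Tuple.sort w) ((k : ℕ) + 1)))
        + (if (2:ℝ) ≤ w (Tuple.sort w k) then (1:ℝ) else 0) *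
          (F (Uset (Tuple.sort w) (k : ℕ)) - F (Uset (Tuple.sort w) ((k : ℕ) + 1))) := by
    intro k
    rw [← add_mul, ← hval]
  rw [Finset.sum_congr rfl fun k _ => hsplit k, Finset.sum_add_distrib,
    level_sum F h0 w 1, level_sum F h0 w 2]
  have hS1 : (Finset.univ.filter fun i => (1:ℝ) ≤ w i) = S := by
    ext i
    simp only [Finset.mem_filter, Finset.mem_univ, true_and, hw]
    by_cases hS : i ∈ S
    · by_cases hT : i ∈ T <;> simp [hS, hT] <;> norm_num
    · have hT : i ∉ T := fun h => hS (hTS h)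
      simp [hS, hT]
  have hS2 : (Finset.univ.filter fun i => (2:ℝ) ≤ w i) = T := by
    ext i
    simp only [Finset.mem_filter, Finset.mem_univ, true_and, hw]
    by_cases hS : i ∈ S
    · by_cases hT : i ∈ T <;> simp [hS, hT] <;> norm_num
    · have hT : i ∉ T := fun h => hS (hTS h)
      simp [hS, hT]
  rw [hS1, hS2]


/-- A set-function is submodular iff its Lovász extension is convex. -/
theorem submodular_iff_lovasz_convex {p : ℕ} (F : Finset (Fin p) → ℝ)
    (h0 : F ∅ = 0) :
    Submodular F ↔ ConvexOn ℝ Set.univ (lovasz F) := by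
  constructor
  · intro hsub
    refine ⟨convex_univ, fun x _ y _ a b ha hb hab => ?_⟩
    rw [lovasz_eq_gp F (a • x + b • y), gp_linear]
    simp only [smul_eq_mul]
    exact add_le_add (mul_le_mul_of_nonneg_left (gp_le_lovasz F h0 hsub _ x) ha)
      (mul_le_mul_of_nonneg_left (gp_le_lovasz F h0 hsub _ y) hb)
  · intro hconv A B
    classical
    set xA : Fin p → ℝ := fun i => (if i ∈ A then (1:ℝ) else 0) + (if i ∈ A then (1:ℝ) else 0)
      with hxA
    set xB : Fin p → ℝ := fun i => (if i ∈ B then (1:ℝ) else 0) + (if i ∈ B then (1:ℝ) else 0)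
      with hxB
    have hmid : (1/2 : ℝ) • xA + (1/2 : ℝ) • xB
        = fun i => (if i ∈ A ∪ B then (1:ℝ) else 0) + (if i ∈ A ∩ B then (1:ℝ) else 0) := by
      funext i
      simp only [Pi.add_apply, Pi.smul_apply, smul_eq_mul, hxA, hxB]
      by_cases hA : i ∈ A <;> by_cases hB : i ∈ B <;>
        simp [hA, hB, Finset.mem_union, Finset.mem_inter] <;> norm_num
    have hc := hconv.2 (Set.mem_univ xA) (Set.mem_univ xB)
      (by norm_num : (0:ℝ) ≤ 1/2) (by norm_num : (0:ℝ) ≤ 1/2) (by norm_num)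
    rw [hmid] at hc
    rw [lovasz_two_indicators F h0 (Finset.inter_subset_union),
      hxA, lovasz_two_indicators F h0 (subset_refl A),
      hxB, lovasz_two_indicators F h0 (subset_refl B)] at hc
    simp only [smul_eq_mul] at hc
    linarith
end

section
/- Let F be submodular with F(∅)=0 and f its Lovász extension. Then min over A ⊆ V of F(A) equals min over w ∈ [0,1]^p of f(w). -/
/-!
Sort the entries of `w` increasingly and let `A_k` be the set of indices of all but the `k`
smallest ones. Abel summation, together with `F ∅ = 0`, turns the Lovász extension into
`f w = ∑ₖ (w₍ₖ₊₁₎ - w₍ₖ₎) F(A_k)` with `w₍₀₎ = 0`. On the cube the coefficients are nonnegative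
and add up to `max w ≤ 1`, so `f w ≥ min F` because `min F ≤ F ∅ = 0`. At the indicator vector of
`A` the coefficients are `0` except for a `1` in front of `F A` (if `A ≠ ∅`), so `f 1_A = F A`.
-/

theorem sum_range_mul_sub_eq_sum_sub_mul {R : Type*} [CommRing R] (G a : ℕ → R) (n : ℕ) :
    ∑ k ∈ Finset.range n, G (k + 1) * (a k - a (k + 1)) =
      ∑ k ∈ Finset.range n, (G (k + 1) - G k) * a k + G 0 * a 0 - G n * a n := by
  induction n with
  | zero => simp
  | succ n ih =>
    rw [Finset.sum_range_succ, Finset.sum_range_succ, ih]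
    ring

section SortedEntries

variable {p : ℕ} (w : Fin p → ℝ)

/-- The order statistics of `w`, one-indexed: `sortedEntry w (k + 1)` is the `k`-th smallest
entry (counting from `0`), and `sortedEntry w 0 = 0`. -/
noncomputable def sortedEntry : ℕ → ℝ
  | 0 => 0
  | k + 1 => if h : k < p then w (Tuple.sort w ⟨k, h⟩) else 0

noncomputable def sortedSuffix (k : ℕ) : Finset (Fin p) :=
  {i | k ≤ ((Tuple.sort w).symm i : ℕ)}

theorem sortedEntry_succ (k : Fin p) : sortedEntry w (k + 1) = w (Tuple.sort w k) := by
  simp [sortedEntry, k.2]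

theorem sortedEntry_symm_succ (i : Fin p) :
    sortedEntry w ((Tuple.sort w).symm i + 1) = w i := by
  rw [sortedEntry_succ, Equiv.apply_symm_apply]

theorem mem_sortedSuffix {k : ℕ} {i : Fin p} :
    i ∈ sortedSuffix w k ↔ k ≤ ((Tuple.sort w).symm i : ℕ) := by
  simp [sortedSuffix]

theorem sortedSuffix_self : sortedSuffix w p = ∅ := by
  ext i
  simp [mem_sortedSuffix, ((Tuple.sort w).symm i).2]

theorem sortedSuffix_eq_image_Ici (k : Fin p) :
    sortedSuffix w k = (Finset.Ici k).image (Tuple.sort w) := by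
  rw [Equiv.image_eq_preimage_symm_of_finset]
  ext i
  rw [Finset.mem_preimage, mem_sortedSuffix, Finset.mem_Ici, Fin.le_def]

theorem sortedSuffix_succ_eq_image_Ioi (k : Fin p) :
    sortedSuffix w (k + 1) = (Finset.Ioi k).image (Tuple.sort w) := by
  rw [Equiv.image_eq_preimage_symm_of_finset]
  ext i
  rw [Finset.mem_preimage, mem_sortedSuffix, Finset.mem_Ioi, Fin.lt_def, Nat.succ_le_iff]

theorem sortedEntry_le_sortedEntry (hw : ∀ i, 0 ≤ w i) {k l : ℕ} (hkl : k ≤ l) (hl : l ≤ p) :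
    sortedEntry w k ≤ sortedEntry w l := by
  match k, l, hkl with
  | 0, 0, _ => exact le_rfl
  | 0, l + 1, _ => simpa [sortedEntry, show l < p by omega] using hw _
  | k + 1, l + 1, hkl =>
    simpa [sortedEntry, show k < p by omega, show l < p by omega] using
      Tuple.monotone_sort w (show (⟨k, by omega⟩ : Fin p) ≤ ⟨l, by omega⟩ from by
        simpa [Fin.le_def] using hkl)

theorem sortedEntry_eq_zero_or_mem_range (k : ℕ) :
    sortedEntry w k = 0 ∨ sortedEntry w k ∈ Set.range w := by
  rcases k with _ | k
  · exact .inl rfl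
  · simp only [sortedEntry]
    split_ifs
    exacts [.inr ⟨_, rfl⟩, .inl rfl]

theorem sortedEntry_le {c : ℝ} (hc : 0 ≤ c) (hw : ∀ i, w i ≤ c) (k : ℕ) : sortedEntry w k ≤ c := by
  rcases k with _ | k
  · exact hc
  · simp only [sortedEntry]
    split_ifs
    exacts [hw _, hc]

theorem sortedSuffix_eq_filter_of_lt (hw : ∀ i, 0 ≤ w i) {k : ℕ} (hk : k < p)
    (hlt : sortedEntry w k < sortedEntry w (k + 1)) :
    sortedSuffix w k = ({i | sortedEntry w (k + 1) ≤ w i} : Finset (Fin p)) := by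
  ext i
  rw [mem_sortedSuffix, Finset.mem_filter_univ, ← sortedEntry_symm_succ w i]
  have hi := ((Tuple.sort w).symm i).2
  constructor
  · intro hki
    exact sortedEntry_le_sortedEntry w hw (by omega) (by omega)
  · intro hle
    by_contra! hik
    exact (hle.trans (sortedEntry_le_sortedEntry w hw (by omega) hk.le)).not_gt hlt

theorem le_sortedEntry_self (hw : ∀ i, 0 ≤ w i) (i : Fin p) : w i ≤ sortedEntry w p := by
  rw [← sortedEntry_symm_succ w i]
  exact sortedEntry_le_sortedEntry w hw ((Tuple.sort w).symm i).2 le_rfl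

end SortedEntries

section Lovasz

variable {p : ℕ} (F : Finset (Fin p) → ℝ)

theorem lovasz_eq_sum_range (w : Fin p → ℝ) :
    lovasz F w = ∑ k ∈ Finset.range p,
      sortedEntry w (k + 1) * (F (sortedSuffix w k) - F (sortedSuffix w (k + 1))) := by
  rw [← Fin.sum_univ_eq_sum_range, lovasz]
  simp only [sortedEntry_succ, sortedSuffix_eq_image_Ici, sortedSuffix_succ_eq_image_Ioi]

theorem lovasz_eq_sum_sub_mul (h0 : F ∅ = 0) (w : Fin p → ℝ) :
    lovasz F w = ∑ k ∈ Finset.range p,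
      (sortedEntry w (k + 1) - sortedEntry w k) * F (sortedSuffix w k) := by
  rw [lovasz_eq_sum_range, sum_range_mul_sub_eq_sum_sub_mul, sortedSuffix_self, h0]
  simp [sortedEntry]

theorem le_lovasz_of_forall_le (h0 : F ∅ = 0) {m : ℝ} (hm : ∀ A, m ≤ F A) {w : Fin p → ℝ}
    (hw : ∀ i, w i ∈ Set.Icc (0 : ℝ) 1) : m ≤ lovasz F w := by
  have hw0 : ∀ i, 0 ≤ w i := fun i => (hw i).1
  have hgap : ∀ k ∈ Finset.range p, 0 ≤ sortedEntry w (k + 1) - sortedEntry w k :=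
    fun k hk => sub_nonneg.2 <|
      sortedEntry_le_sortedEntry w hw0 k.le_succ (Finset.mem_range.1 hk)
  -- the gaps add up to the largest entry, which is at most `1`, while `m ≤ F ∅ = 0`
  calc m ≤ sortedEntry w p * m :=
        le_mul_of_le_one_left (h0 ▸ hm ∅) (sortedEntry_le w zero_le_one (fun i => (hw i).2) p)
    _ = ∑ k ∈ Finset.range p, (sortedEntry w (k + 1) - sortedEntry w k) * m := by
        rw [← Finset.sum_mul, Finset.sum_range_sub]
        simp [sortedEntry]
    _ ≤ lovasz F w := by
        rw [lovasz_eq_sum_sub_mul F h0]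
        exact Finset.sum_le_sum fun k hk => mul_le_mul_of_nonneg_left (hm _) (hgap k hk)

theorem sortedSuffix_indicator_of_lt (A : Finset (Fin p)) {k : ℕ} (hk : k < p)
    (hlt : sortedEntry (fun i => if i ∈ A then 1 else 0) k <
      sortedEntry (fun i => if i ∈ A then 1 else 0) (k + 1)) :
    sortedSuffix (fun i => if i ∈ A then 1 else 0) k = A := by
  set w : Fin p → ℝ := fun i => if i ∈ A then 1 else 0
  have hw0 : ∀ i, 0 ≤ w i := fun i => by by_cases h : i ∈ A <;> simp [w, h]
  have hpos : 0 < sortedEntry w (k + 1) :=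
    (sortedEntry_le_sortedEntry w hw0 k.zero_le hk.le).trans_lt hlt
  have hone : sortedEntry w (k + 1) = 1 := by
    obtain ⟨i, hi⟩ := (sortedEntry_eq_zero_or_mem_range w (k + 1)).resolve_left hpos.ne'
    rw [← hi] at hpos ⊢
    by_cases h : i ∈ A <;> simp [w, h] at hpos ⊢
  rw [sortedSuffix_eq_filter_of_lt w hw0 hk hlt, hone]
  ext i
  by_cases hi : i ∈ A <;> simp [w, hi]

theorem lovasz_indicator (h0 : F ∅ = 0) (A : Finset (Fin p)) :
    lovasz F (fun i => if i ∈ A then 1 else 0) = F A := by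
  set w : Fin p → ℝ := fun i => if i ∈ A then 1 else 0
  have hw : ∀ i, w i ∈ Set.Icc (0 : ℝ) 1 := fun i => by by_cases h : i ∈ A <;> simp [w, h]
  have hgap : ∀ k ∈ Finset.range p, (sortedEntry w (k + 1) - sortedEntry w k) *
      F (sortedSuffix w k) = (sortedEntry w (k + 1) - sortedEntry w k) * F A := by
    intro k hk
    have hk : k < p := Finset.mem_range.1 hk
    rcases (sortedEntry_le_sortedEntry w (fun i => (hw i).1) k.le_succ hk).lt_or_eq
      with hlt | heq
    · rw [sortedSuffix_indicator_of_lt A hk hlt]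
    · rw [heq, sub_self, zero_mul, zero_mul]
  have hmax : sortedEntry w p * F A = F A := by
    rcases A.eq_empty_or_nonempty with rfl | ⟨i, hi⟩
    · rw [h0, mul_zero]
    · have hle : sortedEntry w p ≤ 1 := sortedEntry_le w zero_le_one (fun j => (hw j).2) p
      have hge : 1 ≤ sortedEntry w p := by
        simpa [w, hi] using le_sortedEntry_self w (fun j => (hw j).1) i
      rw [le_antisymm hle hge, one_mul]
  rw [lovasz_eq_sum_sub_mul F h0, Finset.sum_congr rfl hgap, ← Finset.sum_mul,
    Finset.sum_range_sub, sortedEntry, sub_zero, hmax]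

end Lovasz

theorem submodular_min_eq_lovasz_min_cube_general {p : ℕ} (F : Finset (Fin p) → ℝ)
    (h0 : F ∅ = 0) :
    IsLeast {x : ℝ | ∃ A : Finset (Fin p), x = F A}
      (sInf {x : ℝ | ∃ w : Fin p → ℝ, (∀ i, w i ∈ Set.Icc (0 : ℝ) 1) ∧
        x = lovasz F w}) := by
  obtain ⟨A₀, -, hA₀⟩ := Finset.univ.exists_min_image F Finset.univ_nonempty
  have hmin : ∀ A, F A₀ ≤ F A := fun A => hA₀ A (Finset.mem_univ A)
  have hcube : IsLeast {x : ℝ | ∃ w : Fin p → ℝ, (∀ i, w i ∈ Set.Icc (0 : ℝ) 1) ∧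
      x = lovasz F w} (F A₀) := by
    refine ⟨⟨fun i => if i ∈ A₀ then 1 else 0, fun i => ?_, (lovasz_indicator F h0 A₀).symm⟩, ?_⟩
    · by_cases h : i ∈ A₀ <;> simp [h]
    · rintro _ ⟨w, hw, rfl⟩
      exact le_lovasz_of_forall_le F h0 hmin hw
  rw [hcube.csInf_eq]
  exact ⟨⟨A₀, rfl⟩, by rintro _ ⟨A, rfl⟩; exact hmin A⟩

/-- Minimizing a submodular function over all subsets is the same as minimizing
its Lovász extension over the unit hypercube. -/
theorem submodular_min_eq_lovasz_min_cube {p : ℕ} (F : Finset (Fin p) → ℝ)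
    (hF : Submodular F) (h0 : F ∅ = 0) :
    IsLeast {x : ℝ | ∃ A : Finset (Fin p), x = F A}
      (sInf {x : ℝ | ∃ w : Fin p → ℝ, (∀ i, w i ∈ Set.Icc (0 : ℝ) 1) ∧
        x = lovasz F w}) :=
  submodular_min_eq_lovasz_min_cube_general F h0
end

section
/- Let F be submodular with F(∅)=0 and let w ∈ ℝ^p take distinct values v_1 > ... > v_m on sets A_1,...,A_m partitioning V. Then s ∈ B(F) maximizes w^T s over B(F) if and only if s(A_1∪...∪A_i) = F(A_1∪...∪A_i) for all i = 1,...,m. -/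
/-
Write `B j = A 1 ∪ ⋯ ∪ A j`. Abel summation gives
`wᵀ t = ∑_{j < m} (v j - v (j+1)) · t(B j) + v m · t(B m)`, where the coefficients
`v j - v (j+1)` are positive, `t(B j) ≤ F(B j)`, and `t(B m) = t(V) = F(V)` on all of `B(F)`.
So every `x ∈ B(F)` that is tight on all the `B j` maximizes `wᵀ t`, and once one such `x` exists,
every maximizer must be tight on all the `B j` too. The greedy vector of an ordering of `V` that
lists `A 1`, then `A 2`, … is such an `x`: submodularity puts it in `B(F)`, and it is tight on
every initial segment of the ordering.
-/
open Finset

section Abel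

variable {α : Type*} [Fintype α] {m : ℕ} {a : ℕ → ℝ} {idx : α → ℕ} {u : α → ℝ}

theorem sum_mul_eq_sum_range_sub_mul_add (hidx : ∀ k, idx k < m) :
    ∑ k, a (idx k) * u k =
      ∑ j ∈ range m, (a j - a (j + 1)) * ∑ k with idx k ≤ j, u k + a m * ∑ k, u k := by
  have telescope (i : ℕ) (hi : i < m) :
      a i = ∑ j ∈ range m, (if i ≤ j then a j - a (j + 1) else 0) + a m := by
    rw [← sum_filter, show {j ∈ range m | i ≤ j} = Ico i m by ext; simp; omega]
    have : ∑ j ∈ Ico i m, (a j - a (j + 1)) = a i - a m := by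
      rw [← neg_sub (a m), ← sum_Ico_sub a hi.le, ← sum_neg_distrib]
      simp
    linarith
  calc ∑ k, a (idx k) * u k
      = ∑ k, ∑ j ∈ range m, (if idx k ≤ j then (a j - a (j + 1)) * u k else 0)
          + a m * ∑ k, u k := by
        simp_rw [mul_sum, ← sum_add_distrib]
        refine sum_congr rfl fun k _ => ?_
        rw [telescope _ (hidx k), add_mul, sum_mul]
        simp [ite_mul]
    _ = _ := by
        rw [sum_comm]
        simp_rw [mul_sum, sum_filter]

private lemma sub_mul_prefixSum_nonneg (hidx : ∀ k, idx k < m) (ha : AntitoneOn a (Set.Iio m))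
    (hU : ∀ j < m, 0 ≤ ∑ k with idx k ≤ j, u k) (htot : ∑ k, u k = 0) :
    ∀ j ∈ range m, 0 ≤ (a j - a (j + 1)) * ∑ k with idx k ≤ j, u k := by
  intro j hj
  rw [mem_range] at hj
  by_cases hjm : j + 1 < m
  · exact mul_nonneg (sub_nonneg.2 (ha (by simpa using hj) (by simpa using hjm) (by omega)))
      (hU j hj)
  · have : ∑ k with idx k ≤ j, u k = 0 := by
      rw [filter_true_of_mem fun k _ => by have := hidx k; omega, htot]
    simp [this]

theorem sum_mul_nonneg_of_prefixSum_nonneg (hidx : ∀ k, idx k < m) (ha : AntitoneOn a (Set.Iio m))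
    (hU : ∀ j < m, 0 ≤ ∑ k with idx k ≤ j, u k) (htot : ∑ k, u k = 0) :
    0 ≤ ∑ k, a (idx k) * u k := by
  rw [sum_mul_eq_sum_range_sub_mul_add hidx, htot, mul_zero, add_zero]
  exact sum_nonneg (sub_mul_prefixSum_nonneg hidx ha hU htot)

theorem prefixSum_eq_zero_of_sum_mul_eq_zero (hidx : ∀ k, idx k < m)
    (ha : StrictAntiOn a (Set.Iio m)) (hU : ∀ j < m, 0 ≤ ∑ k with idx k ≤ j, u k)
    (htot : ∑ k, u k = 0) (h : ∑ k, a (idx k) * u k = 0) :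
    ∀ j < m, ∑ k with idx k ≤ j, u k = 0 := by
  intro j hj
  rw [sum_mul_eq_sum_range_sub_mul_add hidx, htot, mul_zero, add_zero,
    sum_eq_zero_iff_of_nonneg (sub_mul_prefixSum_nonneg hidx ha.antitoneOn hU htot)] at h
  by_cases hjm : j + 1 < m
  · have hpos : 0 < a j - a (j + 1) :=
      sub_pos.2 (ha (by simpa using hj) (by simpa using hjm) (by omega))
    simpa [hpos.ne'] using h j (mem_range.2 hj)
  · rw [filter_true_of_mem fun k _ => by have := hidx k; omega, htot]

end Abel

section Greedy

variable {p : ℕ} {β : Type*} [LinearOrder β] {f : Fin p → β}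

def greedy (F : Finset (Fin p) → ℝ) (f : Fin p → β) (k : Fin p) : ℝ :=
  F {l | f l ≤ f k} - F {l | f l < f k}

lemma insert_filter_lt_eq_filter_le (hf : Function.Injective f) (k : Fin p) :
    insert k ({l | f l < f k} : Finset (Fin p)) = ({l | f l ≤ f k} : Finset (Fin p)) := by
  ext l
  simp only [mem_insert, mem_filter, mem_univ, true_and, le_iff_lt_or_eq, hf.eq_iff]
  tauto

lemma subset_filter_lt_of_forall_le (hf : Function.Injective f) {k : Fin p} {s : Finset (Fin p)}
    (hk : k ∉ s) (hs : ∀ l ∈ s, f l ≤ f k) : s ⊆ ({l | f l < f k} : Finset (Fin p)) := fun l hl =>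
  mem_filter.2 ⟨mem_univ l, (hs l hl).lt_of_ne fun h => hk (hf h ▸ hl)⟩

variable {F : Finset (Fin p) → ℝ}

theorem sum_greedy_le (hF : Submodular F) (h0 : F ∅ = 0) (hf : Function.Injective f)
    (D : Finset (Fin p)) : ∑ k ∈ D, greedy F f k ≤ F D := by
  induction D using induction_on_max_value f with
  | empty => simp [h0]
  | insert k s hk hs ih =>
    have hsub := subset_filter_lt_of_forall_le hf hk hs
    have hsubmod := hF {l | f l < f k} (insert k s)
    rw [union_insert, union_eq_left.2 hsub, insert_filter_lt_eq_filter_le hf,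
      inter_insert_of_notMem (by simp), inter_eq_right.2 hsub] at hsubmod
    rw [sum_insert hk, greedy]
    linarith

theorem sum_greedy_eq_of_forall_le_mem (h0 : F ∅ = 0) (hf : Function.Injective f)
    (D : Finset (Fin p)) (hD : ∀ k ∈ D, ∀ l, f l ≤ f k → l ∈ D) :
    ∑ k ∈ D, greedy F f k = F D := by
  induction D using induction_on_max_value f with
  | empty => simp [h0]
  | insert k s hk hs ih =>
    have hs_eq : s = ({l | f l < f k} : Finset (Fin p)) := by
      refine (subset_filter_lt_of_forall_le hf hk hs).antisymm fun l hl => ?_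
      have hlk : f l < f k := (mem_filter.1 hl).2
      exact (mem_insert.1 (hD k (mem_insert_self k s) l hlk.le)).resolve_left
        (fun h => hlk.ne (h ▸ rfl))
    have ih' := ih fun l hl l' hl' => by
      rw [hs_eq] at hl ⊢
      simp only [mem_filter, mem_univ, true_and] at hl ⊢
      exact hl'.trans_lt hl
    rw [sum_insert hk, ih', greedy, hs_eq, insert_filter_lt_eq_filter_le hf]
    ring

theorem memB_greedy (hF : Submodular F) (h0 : F ∅ = 0) (hf : Function.Injective f) :
    MemB F (greedy F f) :=
  ⟨sum_greedy_le hF h0 hf, sum_greedy_eq_of_forall_le_mem h0 hf univ fun _ _ l _ => mem_univ l⟩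

theorem exists_memB_forall_sum_filter_eq (hF : Submodular F) (h0 : F ∅ = 0) (idx : Fin p → ℕ) :
    ∃ x, MemB F x ∧ ∀ j, ∑ k with idx k ≤ j, x k = F {k | idx k ≤ j} := by
  have hf : Function.Injective fun k => toLex (idx k, k) := fun k l h =>
    (Prod.ext_iff.1 (toLex.injective h)).2
  refine ⟨greedy F _, memB_greedy hF h0 hf, fun j => sum_greedy_eq_of_forall_le_mem h0 hf _ ?_⟩
  intro k hk l hlk
  simp only [mem_filter, mem_univ, true_and] at hk ⊢
  exact (Prod.Lex.monotone_fst _ _ hlk).trans hk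

end Greedy

section Tight

variable {p m : ℕ} {F : Finset (Fin p) → ℝ} {a : ℕ → ℝ} {idx : Fin p → ℕ} {x t : Fin p → ℝ}

theorem sum_mul_le_of_forall_sum_filter_eq (hidx : ∀ k, idx k < m)
    (ha : AntitoneOn a (Set.Iio m)) (hx : MemB F x)
    (hxt : ∀ j < m, ∑ k with idx k ≤ j, x k = F {k | idx k ≤ j}) (ht : MemB F t) :
    ∑ k, a (idx k) * t k ≤ ∑ k, a (idx k) * x k := by
  have := sum_mul_nonneg_of_prefixSum_nonneg (u := x - t) hidx ha
    (fun j hj => by simpa [sum_sub_distrib, hxt j hj] using ht.1 _)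
    (by simp [sum_sub_distrib, hx.2, ht.2])
  simpa [mul_sub, sum_sub_distrib] using this

theorem forall_sum_filter_eq_of_sum_mul_eq (hidx : ∀ k, idx k < m)
    (ha : StrictAntiOn a (Set.Iio m)) (hx : MemB F x)
    (hxt : ∀ j < m, ∑ k with idx k ≤ j, x k = F {k | idx k ≤ j}) (ht : MemB F t)
    (h : ∑ k, a (idx k) * t k = ∑ k, a (idx k) * x k) :
    ∀ j < m, ∑ k with idx k ≤ j, t k = F {k | idx k ≤ j} := by
  intro j hj
  have := prefixSum_eq_zero_of_sum_mul_eq_zero (u := x - t) hidx ha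
    (fun j hj => by simpa [sum_sub_distrib, hxt j hj] using ht.1 _)
    (by simp [sum_sub_distrib, hx.2, ht.2]) (by simp [mul_sub, sum_sub_distrib, h]) j hj
  simp only [Pi.sub_apply, sum_sub_distrib, hxt j hj] at this
  linarith

end Tight

/-- Maximizers of the support function of the base polyhedron: if `w` takes the
distinct values `v 1 > ⋯ > v m` on the sets `A 1, …, A m` partitioning `V`, then
`s ∈ B(F)` maximizes `wᵀ s` over `B(F)` iff all the sets `A 1 ∪ ⋯ ∪ A i` are
tight for `s`. -/
theorem maximizers_support_base {p m : ℕ} (F : Finset (Fin p) → ℝ)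
    (hF : Submodular F) (h0 : F ∅ = 0)
    (w : Fin p → ℝ) (v : Fin m → ℝ) (hv : StrictAnti v)
    (A : Fin m → Finset (Fin p))
    (hA : ∀ (i : Fin m) (k : Fin p), k ∈ A i ↔ w k = v i)
    (hcover : ∀ k : Fin p, ∃ i : Fin m, k ∈ A i)
    (s : Fin p → ℝ) (hs : MemB F s) :
    (∀ t : Fin p → ℝ, MemB F t → ∑ i, w i * t i ≤ ∑ i, w i * s i) ↔
      ∀ i : Fin m, ∑ k ∈ (Finset.Iic i).biUnion A, s k =
        F ((Finset.Iic i).biUnion A) := by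
  classical
  choose idx hidxA using hcover
  have hmemA (i : Fin m) (k : Fin p) : k ∈ A i ↔ idx k = i := by
    rw [hA, (hA _ k).1 (hidxA k), hv.injective.eq_iff, eq_comm]
  have hB (i : Fin m) : (Finset.Iic i).biUnion A = ({k | (idx k : ℕ) ≤ i} : Finset (Fin p)) := by
    ext k
    simp only [mem_biUnion, mem_Iic, mem_filter, mem_univ, true_and, hmemA, exists_eq_right',
      Fin.le_iff_val_le_val]
  set a : ℕ → ℝ := fun j => if h : j < m then v ⟨j, h⟩ else 0
  have hw (k : Fin p) : w k = a (idx k) := by simpa [a] using (hA _ k).1 (hidxA k)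
  have ha : StrictAntiOn a (Set.Iio m) := fun i hi j hj hij => by
    simpa [a, Set.mem_Iio.1 hi, Set.mem_Iio.1 hj] using hv (Fin.mk_lt_mk.2 hij)
  have hidx (k : Fin p) : (idx k : ℕ) < m := (idx k).isLt
  simp_rw [hw, hB]
  obtain ⟨g, hg, hgt⟩ := exists_memB_forall_sum_filter_eq hF h0 fun k => (idx k : ℕ)
  constructor
  · intro hmax i
    exact forall_sum_filter_eq_of_sum_mul_eq hidx ha hg (fun j _ => hgt j) hs
      ((sum_mul_le_of_forall_sum_filter_eq hidx ha.antitoneOn hg (fun j _ => hgt j) hs).antisymm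
        (hmax g hg)) i i.isLt
  · intro hst t ht
    exact sum_mul_le_of_forall_sum_filter_eq hidx ha.antitoneOn hs (fun j hj => hst ⟨j, hj⟩) ht
end

section
/- If A is a minimizer of F restricted to subsets of A (i.e., F(A) ≤ F(B) for all B ⊆ A) and ∅ minimizes B ↦ F(B∪A) − F(A) over B ⊆ V∖A, then A is a global minimizer of F over 2^V; and conversely. -/
open Finset

theorem Submodular.le_of_le_inter_of_le_union {p : ℕ} {F : Finset (Fin p) → ℝ}
    (hF : Submodular F) {A B : Finset (Fin p)} (hinter : F A ≤ F (B ∩ A))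
    (hunion : F A ≤ F (B ∪ A)) : F A ≤ F B := by
  linarith [hF B A]

theorem minimizer_characterization_general {p : ℕ} (F : Finset (Fin p) → ℝ)
    (hF : Submodular F) (A : Finset (Fin p)) :
    ((∀ B ⊆ A, F A ≤ F B) ∧
        (∀ B ⊆ Finset.univ \ A, (0 : ℝ) ≤ F (B ∪ A) - F A)) ↔
      ∀ B : Finset (Fin p), F A ≤ F B := by
  constructor
  · rintro ⟨hinside, houtside⟩ B
    refine hF.le_of_le_inter_of_le_union (hinside _ inter_subset_right) ?_
    have hdiff := houtside (B \ A) (sdiff_subset_sdiff (subset_univ B) le_rfl)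
    rw [sdiff_union_self_eq_union] at hdiff
    exact sub_nonneg.mp hdiff
  · intro hmin
    exact ⟨fun B _ => hmin B, fun B _ => sub_nonneg.mpr (hmin _)⟩

/-- `A` is a global minimizer of a submodular `F` iff `A` minimizes `F` among
subsets of `A` and `∅` minimizes `B ↦ F(B ∪ A) − F(A)` among `B ⊆ V ∖ A`. -/
theorem minimizer_characterization {p : ℕ} (F : Finset (Fin p) → ℝ)
    (hF : Submodular F) (h0 : F ∅ = 0) (A : Finset (Fin p)) :
    ((∀ B ⊆ A, F A ≤ F B) ∧
        (∀ B ⊆ Finset.univ \ A, (0 : ℝ) ≤ F (B ∪ A) - F A)) ↔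
      ∀ B : Finset (Fin p), F A ≤ F B :=
  minimizer_characterization_general F hF A
end

section
/- Partial minimization preserves submodularity: let G be submodular on V∪W with V∩W=∅ and G(∅)=0. Then F(A) := min over B ⊆ W of G(A∪B) minus min over B ⊆ W of G(B), defined for A ⊆ V, is submodular with F(∅)=0. -/
/-!
Fix minimizers `C, D ⊆ W` for `A` and `B`. Since `A, B ⊆ V` are disjoint from `W`,
`(A ∪ C) ∪ (B ∪ D) = (A ∪ B) ∪ (C ∪ D)` and `(A ∪ C) ∩ (B ∪ D) = (A ∩ B) ∪ (C ∩ D)`,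
so submodularity of `G` at `A ∪ C`, `B ∪ D` bounds the values of the partial minimum at
`A ∪ B` and `A ∩ B` (witnessed by `C ∪ D` and `C ∩ D`) by its values at `A` and `B`.
-/

namespace Finset

variable {α : Type*} [DecidableEq α]

def IsSubmodularOn (S : Finset α) (G : Finset α → ℝ) : Prop :=
  ∀ A B, A ⊆ S → B ⊆ S → G (A ∪ B) + G (A ∩ B) ≤ G A + G B

noncomputable def partialMin (G : Finset α → ℝ) (W A : Finset α) : ℝ :=
  (W.powerset.image fun B => G (A ∪ B)).min' (W.powerset_nonempty.image _)

section partialMin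

variable (G : Finset α → ℝ) (W : Finset α)

theorem partialMin_le {A B : Finset α} (hB : B ⊆ W) : partialMin G W A ≤ G (A ∪ B) :=
  min'_le _ _ (mem_image_of_mem _ (mem_powerset.mpr hB))

theorem exists_partialMin_eq (A : Finset α) : ∃ B ⊆ W, partialMin G W A = G (A ∪ B) := by
  obtain ⟨B, hB, hmin⟩ := mem_image.mp <|
    min'_mem (W.powerset.image fun B => G (A ∪ B)) (W.powerset_nonempty.image _)
  exact ⟨B, mem_powerset.mp hB, hmin.symm⟩

theorem partialMin_empty :
    partialMin G W ∅ = (W.powerset.image G).min' (W.powerset_nonempty.image _) := by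
  simp only [partialMin, empty_union]

end partialMin

theorem union_inter_union_of_disjoint {A B C D : Finset α} (hAD : Disjoint A D)
    (hBC : Disjoint B C) : (A ∪ C) ∩ (B ∪ D) = A ∩ B ∪ C ∩ D := by
  ext x
  have := @disjoint_left.mp hAD x
  have := @disjoint_left.mp hBC x
  simp only [mem_inter, mem_union]
  tauto

theorem IsSubmodularOn.isSubmodularOn_partialMin {S T W : Finset α} {G : Finset α → ℝ}
    (hG : IsSubmodularOn S G) (hWS : W ⊆ S) (hTS : T ⊆ S) (hTW : Disjoint T W) :
    IsSubmodularOn T (partialMin G W) := by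
  intro A B hA hB
  have hAW := hTW.mono_left hA
  have hBW := hTW.mono_left hB
  obtain ⟨C, hCW, hC⟩ := exists_partialMin_eq G W A
  obtain ⟨D, hDW, hD⟩ := exists_partialMin_eq G W B
  calc partialMin G W (A ∪ B) + partialMin G W (A ∩ B)
      ≤ G (A ∪ B ∪ (C ∪ D)) + G (A ∩ B ∪ C ∩ D) :=
        add_le_add (partialMin_le G W (union_subset hCW hDW))
          (partialMin_le G W (inter_subset_left.trans hCW))
    _ = G (A ∪ C ∪ (B ∪ D)) + G ((A ∪ C) ∩ (B ∪ D)) := by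
        rw [union_union_union_comm,
          union_inter_union_of_disjoint (hAW.mono_right hDW) (hBW.mono_right hCW)]
    _ ≤ G (A ∪ C) + G (B ∪ D) :=
        hG _ _ (union_subset (hA.trans hTS) (hCW.trans hWS))
          (union_subset (hB.trans hTS) (hDW.trans hWS))
    _ = partialMin G W A + partialMin G W B := by rw [hC, hD]

end Finset

open Finset

theorem partial_min_submodular_general {α : Type*} [DecidableEq α] (V W : Finset α)
    (hVW : Disjoint V W) (G : Finset α → ℝ)
    (hG : ∀ A B : Finset α, A ⊆ V ∪ W → B ⊆ V ∪ W →
      G (A ∪ B) + G (A ∩ B) ≤ G A + G B)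
    (F : Finset α → ℝ)
    (hFdef : ∀ A ⊆ V,
      F A = ((W.powerset.image fun B => G (A ∪ B)).min'
              ((W.powerset_nonempty).image _)) -
            ((W.powerset.image fun B => G B).min'
              ((W.powerset_nonempty).image _))) :
    F ∅ = 0 ∧
      ∀ A B : Finset α, A ⊆ V → B ⊆ V →
        F (A ∪ B) + F (A ∩ B) ≤ F A + F B := by
  have hF : ∀ A ⊆ V, F A = partialMin G W A - partialMin G W ∅ := fun A hA => by
    rw [hFdef A hA, partialMin_empty]
    rfl
  refine ⟨(hF ∅ (empty_subset V)).trans (sub_self _), fun A B hA hB => ?_⟩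
  have hsub := IsSubmodularOn.isSubmodularOn_partialMin (S := V ∪ W) hG subset_union_right
    subset_union_left hVW A B hA hB
  rw [hF A hA, hF B hB, hF _ (union_subset hA hB), hF _ (inter_subset_left.trans hA)]
  linarith

/-- Partial minimization of a submodular function over a disjoint set of
variables preserves submodularity. -/
theorem partial_min_submodular {α : Type*} [DecidableEq α] (V W : Finset α)
    (hVW : Disjoint V W) (G : Finset α → ℝ)
    (hG : ∀ A B : Finset α, A ⊆ V ∪ W → B ⊆ V ∪ W →
      G (A ∪ B) + G (A ∩ B) ≤ G A + G B)
    (hG0 : G ∅ = 0)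
    (F : Finset α → ℝ)
    (hFdef : ∀ A ⊆ V,
      F A = ((W.powerset.image fun B => G (A ∪ B)).min'
              ((W.powerset_nonempty).image _)) -
            ((W.powerset.image fun B => G B).min'
              ((W.powerset_nonempty).image _))) :
    F ∅ = 0 ∧
      ∀ A B : Finset α, A ⊆ V → B ⊆ V →
        F (A ∪ B) + F (A ∩ B) ≤ F A + F B :=
  partial_min_submodular_general V W hVW G hG F hFdef
end

section
/- Convolution with a modular function: let F be submodular with F(∅)=0 and z ∈ ℝ^p. Then G(A) = min over B ⊆ A of [F(B) + z(A∖B)] is submodular, G ≤ F, G ≤ z (as set-functions), and P(G) = P(F) ∩ {s ∈ ℝ^p : s ≤ z}. -/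
open Finset

section Convolution

variable {α : Type*} [DecidableEq α]

noncomputable def convolution (F : Finset α → ℝ) (z : α → ℝ) (A : Finset α) : ℝ :=
  (A.powerset.image fun B => F B + ∑ k ∈ A \ B, z k).min' (A.powerset_nonempty.image _)

variable {F : Finset α → ℝ} {z : α → ℝ} {A B : Finset α}

theorem convolution_le (hBA : B ⊆ A) : convolution F z A ≤ F B + ∑ k ∈ A \ B, z k :=
  min'_le _ _ (mem_image.2 ⟨B, mem_powerset.2 hBA, rfl⟩)

theorem exists_convolution_eq (F : Finset α → ℝ) (z : α → ℝ) (A : Finset α) :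
    ∃ B ⊆ A, convolution F z A = F B + ∑ k ∈ A \ B, z k := by
  obtain ⟨B, hB, hEq⟩ := mem_image.1 (min'_mem _ (A.powerset_nonempty.image
    fun B => F B + ∑ k ∈ A \ B, z k))
  exact ⟨B, mem_powerset.1 hB, hEq.symm⟩

theorem le_convolution {c : ℝ} (h : ∀ B ⊆ A, c ≤ F B + ∑ k ∈ A \ B, z k) :
    c ≤ convolution F z A :=
  le_min' _ _ _ fun _ hy => by
    obtain ⟨B, hB, rfl⟩ := mem_image.1 hy
    exact h B (mem_powerset.1 hB)

theorem convolution_le_self : convolution F z A ≤ F A := by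
  simpa using convolution_le (F := F) (z := z) (subset_refl A)

theorem convolution_le_sum (h0 : F ∅ = 0) : convolution F z A ≤ ∑ k ∈ A, z k := by
  simpa [h0] using convolution_le (F := F) (z := z) (empty_subset A)

end Convolution

theorem Finset.sum_union_sdiff_add_sum_inter_sdiff {α M : Type*} [DecidableEq α]
    [AddCommGroup M] (f : α → M) {A B C D : Finset α} (hCA : C ⊆ A) (hDB : D ⊆ B) :
    ∑ k ∈ (A ∪ B) \ (C ∪ D), f k + ∑ k ∈ (A ∩ B) \ (C ∩ D), f k
      = ∑ k ∈ A \ C, f k + ∑ k ∈ B \ D, f k := by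
  rw [sum_sdiff_eq_sub (union_subset_union hCA hDB), sum_sdiff_eq_sub (inter_subset_inter hCA hDB),
    sum_sdiff_eq_sub hCA, sum_sdiff_eq_sub hDB, sub_add_sub_comm, sub_add_sub_comm,
    sum_union_inter, sum_union_inter]

section SetFunction

variable {p : ℕ} {F : Finset (Fin p) → ℝ}

theorem Submodular.convolution (hF : Submodular F) (z : Fin p → ℝ) :
    Submodular (convolution F z) := by
  intro A B
  obtain ⟨C, hCA, hC⟩ := exists_convolution_eq F z A
  obtain ⟨D, hDB, hD⟩ := exists_convolution_eq F z B
  have hunion := convolution_le (F := F) (z := z) (union_subset_union hCA hDB)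
  have hinter := convolution_le (F := F) (z := z) (inter_subset_inter hCA hDB)
  have hmod := sum_union_sdiff_add_sum_inter_sdiff z hCA hDB
  linarith [hF C D]

theorem memP_convolution_iff (h0 : F ∅ = 0) (z s : Fin p → ℝ) :
    MemP (convolution F z) s ↔ MemP F s ∧ ∀ k, s k ≤ z k := by
  constructor
  · intro hs
    refine ⟨fun A => (hs A).trans convolution_le_self, fun k => ?_⟩
    simpa using (hs {k}).trans (convolution_le_sum (z := z) h0)
  · rintro ⟨hsF, hsz⟩ A
    refine le_convolution fun B hBA => ?_
    rw [← sum_sdiff hBA, add_comm]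
    exact add_le_add (hsF B) (sum_le_sum fun k _ => hsz k)

end SetFunction

/-- Convolution of a submodular function and a modular function:
`G(A) = min_{B ⊆ A} F(B) + z(A ∖ B)` is submodular, `G ≤ F`, `G ≤ z`, and
`P(G) = P(F) ∩ {s ≤ z}`. -/
theorem convolution_submodular_modular {p : ℕ} (F : Finset (Fin p) → ℝ)
    (hF : Submodular F) (h0 : F ∅ = 0) (z : Fin p → ℝ)
    (G : Finset (Fin p) → ℝ)
    (hGdef : ∀ A : Finset (Fin p),
      G A = ((A.powerset.image fun B => F B + ∑ k ∈ A \ B, z k).min'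
        ((A.powerset_nonempty).image _))) :
    Submodular G ∧
      (∀ A : Finset (Fin p), G A ≤ F A ∧ G A ≤ ∑ k ∈ A, z k) ∧
      ∀ s : Fin p → ℝ, (MemP G s ↔ MemP F s ∧ ∀ k, s k ≤ z k) := by
  obtain rfl : G = convolution F z := funext hGdef
  exact ⟨hF.convolution z, fun _ => ⟨convolution_le_self, convolution_le_sum h0⟩,
    memP_convolution_iff h0 z⟩
end

section
/- Monotonicity of minimizers of parameterized submodular problems: let F be submodular and ψ'_1,...,ψ'_p : ℝ → ℝ strictly increasing functions. For α ∈ ℝ let A^α be any minimizer of A ↦ F(A) + ∑_{j∈A} ψ'_j(α). Then α > β implies A^α ⊆ A^β. -/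
/-!
Compare a minimizer `A` of `F + v(·)` with the intersection `A ∩ B` and a minimizer `B` of
`F + w(·)` with the union `A ∪ B`; adding the two inequalities and using submodularity leaves
`v(A \ B) ≤ w(A \ B)`. If `v = ψ(α)` and `w = ψ(β)` with every `ψ j` strictly increasing and
`β < α`, this forces `A \ B = ∅`.
-/

lemma Submodular.sum_sdiff_le_of_minimizers {p : ℕ} {F : Finset (Fin p) → ℝ}
    (hF : Submodular F) {v w : Fin p → ℝ} {A B : Finset (Fin p)}
    (hA : ∀ C, F A + ∑ j ∈ A, v j ≤ F C + ∑ j ∈ C, v j)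
    (hB : ∀ C, F B + ∑ j ∈ B, w j ≤ F C + ∑ j ∈ C, w j) :
    ∑ j ∈ A \ B, v j ≤ ∑ j ∈ A \ B, w j := by
  have hA_inter := hA (A ∩ B)
  have hB_union := hB (A ∪ B)
  have hsplit_v := Finset.sum_inter_add_sum_sdiff A B v
  have hsplit_w := Finset.sum_inter_add_sum_sdiff A B w
  have hunion_w := Finset.sum_union_inter (s₁ := A) (s₂ := B) (f := w)
  linarith [hF A B]

theorem minimizers_monotone_general {p : ℕ} (F : Finset (Fin p) → ℝ)
    (hF : Submodular F)
    (ψ : Fin p → ℝ → ℝ) (hψ : ∀ j, StrictMono (ψ j))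
    (α β : ℝ) (hαβ : β < α)
    (Aα Aβ : Finset (Fin p))
    (hAα : ∀ B : Finset (Fin p),
      F Aα + ∑ j ∈ Aα, ψ j α ≤ F B + ∑ j ∈ B, ψ j α)
    (hAβ : ∀ B : Finset (Fin p),
      F Aβ + ∑ j ∈ Aβ, ψ j β ≤ F B + ∑ j ∈ B, ψ j β) :
    Aα ⊆ Aβ := by
  rw [← Finset.sdiff_eq_empty_iff_subset, ← Finset.not_nonempty_iff_eq_empty]
  intro hne
  have hlt : ∑ j ∈ Aα \ Aβ, ψ j β < ∑ j ∈ Aα \ Aβ, ψ j α :=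
    Finset.sum_lt_sum_of_nonempty hne fun j _ => hψ j hαβ
  exact hlt.not_ge (hF.sum_sdiff_le_of_minimizers hAα hAβ)

/-- Monotonicity of minimizers: if each `ψ j` is strictly increasing and `Aα`, `Aβ`
are minimizers of `A ↦ F(A) + ∑_{j ∈ A} ψ j α` (resp. with `β`), then `α > β`
implies `Aα ⊆ Aβ`. -/
theorem minimizers_monotone {p : ℕ} (F : Finset (Fin p) → ℝ)
    (hF : Submodular F) (h0 : F ∅ = 0)
    (ψ : Fin p → ℝ → ℝ) (hψ : ∀ j, StrictMono (ψ j))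
    (α β : ℝ) (hαβ : β < α)
    (Aα Aβ : Finset (Fin p))
    (hAα : ∀ B : Finset (Fin p),
      F Aα + ∑ j ∈ Aα, ψ j α ≤ F B + ∑ j ∈ B, ψ j α)
    (hAβ : ∀ B : Finset (Fin p),
      F Aβ + ∑ j ∈ Aβ, ψ j β ≤ F B + ∑ j ∈ B, ψ j β) :
    Aα ⊆ Aβ :=
  minimizers_monotone_general F hF ψ hψ α β hαβ Aα Aβ hAα hAβ
end
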